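/- Along any solution of the three point vortex system in which the points remain distinct, the quantity S_ε = l_{1,2}(t)^{ε-1}/ξ_3 + l_{2,3}(t)^{ε-1}/ξ_1 + l_{3,1}(t)^{ε-1}/ξ_2 is constant in time. -/

import Mathlib

/-!
Write `L_ij = l_ij^(ε-3)` and let `A = ⟪x₁ - x₂, (x₂ - x₃)^⊥⟫`, twice the signed area of the
triangle, which is invariant under cyclic relabelling. Since `⟪v, K v⟫ = 0`, the vortex equations give
`d/dt l_ij^(ε-1) = (ε-1) c ξ_k A L_ij (L_ik - L_jk)` for `{i, j, k} = {1, 2, 3}`. Dividing by `ξ_k`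
and summing over the three edges, the terms `L_ij L_ik` cancel in pairs, so `S_ε` has zero
derivative on the open preconnected time set and is therefore constant there.
-/

open scoped RealInnerProductSpace

noncomputable def perp (x : EuclideanSpace ℝ (Fin 2)) : EuclideanSpace ℝ (Fin 2) :=
  WithLp.toLp 2 ![x 1, -x 0]

noncomputable def K (ε c : ℝ) (x : EuclideanSpace ℝ (Fin 2)) : EuclideanSpace ℝ (Fin 2) :=
  (c / ‖x‖ ^ (3 - ε)) • perp x

lemma HasDerivAt.norm_rpow {F : Type*} [NormedAddCommGroup F] [InnerProductSpace ℝ F]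
    {g : ℝ → F} {g' : F} {t : ℝ} (hg : HasDerivAt g g' t) (h0 : g t ≠ 0) (p : ℝ) :
    HasDerivAt (fun u => ‖g u‖ ^ p) (p * ‖g t‖ ^ (p - 2) * ⟪g t, g'⟫) t := by
  have sq_rpow : ∀ u, (‖g u‖ ^ 2) ^ (p / 2) = ‖g u‖ ^ p := fun u => by
    rw [← Real.rpow_natCast, ← Real.rpow_mul (norm_nonneg _)]
    congr 1
    ring
  have hsq : ‖g t‖ ^ 2 ≠ 0 := pow_ne_zero 2 (norm_ne_zero_iff.mpr h0)
  have h := hg.norm_sq.rpow_const (p := p / 2) (Or.inl hsq)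
  simp only [sq_rpow] at h
  convert h using 1
  rw [← Real.rpow_natCast, ← Real.rpow_mul (norm_nonneg _),
    show p - 2 = (2 : ℕ) * (p / 2 - 1) by push_cast; ring]
  ring

lemma inner_perp (a b : EuclideanSpace ℝ (Fin 2)) :
    ⟪a, perp b⟫ = a 0 * b 1 - a 1 * b 0 := by
  simp [perp, PiLp.inner_apply, Fin.sum_univ_two]
  ring

lemma inner_K (ε c : ℝ) (a b : EuclideanSpace ℝ (Fin 2)) :
    ⟪a, K ε c b⟫ = c * ‖b‖ ^ (ε - 3) * ⟪a, perp b⟫ := by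
  rw [K, real_inner_smul_right, show ε - 3 = -(3 - ε) by ring, Real.rpow_neg (norm_nonneg b),
    div_eq_mul_inv]

lemma inner_sub_perp_sub_cyclic (a b d : EuclideanSpace ℝ (Fin 2)) :
    ⟪a - b, perp (b - d)⟫ = ⟪b - d, perp (d - a)⟫ := by
  simp only [inner_perp, PiLp.sub_apply]
  ring

noncomputable def vortexVelocity {n : ℕ} (ε c : ℝ) (ξ : Fin n → ℝ)
    (x : Fin n → EuclideanSpace ℝ (Fin 2)) (i : Fin n) : EuclideanSpace ℝ (Fin 2) :=
  ∑ j ∈ Finset.univ.erase i, ξ j • K ε c (x i - x j)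

section ThreeVortices

variable {ε c : ℝ} {ξ : Fin 3 → ℝ} {i j k : Fin 3}

lemma vortexVelocity_eq_of_ne (x : Fin 3 → EuclideanSpace ℝ (Fin 2))
    (hij : i ≠ j) (hik : i ≠ k) (hjk : j ≠ k) :
    vortexVelocity ε c ξ x i = ξ j • K ε c (x i - x j) + ξ k • K ε c (x i - x k) := by
  have hrest : Finset.univ.erase i = {j, k} := by
    revert i j k
    decide
  rw [vortexVelocity, hrest, Finset.sum_pair hjk]

lemma inner_sub_vortexVelocity (x : Fin 3 → EuclideanSpace ℝ (Fin 2))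
    (hij : i ≠ j) (hik : i ≠ k) (hjk : j ≠ k) :
    ⟪x i - x j, vortexVelocity ε c ξ x i - vortexVelocity ε c ξ x j⟫ =
      ξ k * c * ⟪x i - x j, perp (x j - x k)⟫ *
        (‖x i - x k‖ ^ (ε - 3) - ‖x j - x k‖ ^ (ε - 3)) := by
  rw [vortexVelocity_eq_of_ne x hij hik hjk, vortexVelocity_eq_of_ne x hij.symm hjk hik]
  simp only [inner_sub_right, inner_add_right, real_inner_smul_right, inner_K, inner_perp,
    PiLp.sub_apply]
  ring

lemma hasDerivAt_norm_sub_rpow_div {x : Fin 3 → ℝ → EuclideanSpace ℝ (Fin 2)} {s : ℝ}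
    (hx : ∀ l, HasDerivAt (x l) (vortexVelocity ε c ξ (fun l => x l s) l) s)
    (hij : i ≠ j) (hik : i ≠ k) (hjk : j ≠ k) (hξk : ξ k ≠ 0) (hne : x i s ≠ x j s) :
    HasDerivAt (fun u => ‖x i u - x j u‖ ^ (ε - 1) / ξ k)
      ((ε - 1) * c * ⟪x i s - x j s, perp (x j s - x k s)⟫ * ‖x i s - x j s‖ ^ (ε - 3) *
        (‖x i s - x k s‖ ^ (ε - 3) - ‖x j s - x k s‖ ^ (ε - 3))) s := by
  have h := ((hx i).sub (hx j)).norm_rpow (sub_ne_zero.mpr hne) (ε - 1)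
  refine (h.div_const (ξ k)).congr_deriv ?_
  rw [Pi.sub_apply, inner_sub_vortexVelocity (fun l => x l s) hij hik hjk,
    show ε - 1 - 2 = ε - 3 by ring]
  field_simp

end ThreeVortices

theorem stmt_3_general (ε c : ℝ)
    (ξ : Fin 3 → ℝ) (hξ : ∀ i, ξ i ≠ 0)
    (x : Fin 3 → ℝ → EuclideanSpace ℝ (Fin 2)) (I : Set ℝ) (hI : IsOpen I)
    (hconn : IsPreconnected I)
    (hdist : ∀ s ∈ I, ∀ i j : Fin 3, i ≠ j → x i s ≠ x j s)
    (hode : ∀ i : Fin 3, ∀ s ∈ I,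
      HasDerivAt (x i) (∑ j ∈ Finset.univ.erase i, ξ j • K ε c (x i s - x j s)) s)
    (t s : ℝ) (ht : t ∈ I) (hs : s ∈ I) :
    ‖x 0 t - x 1 t‖ ^ (ε - 1) / ξ 2 + ‖x 1 t - x 2 t‖ ^ (ε - 1) / ξ 0 + ‖x 2 t - x 0 t‖ ^ (ε - 1) / ξ 1
      = ‖x 0 s - x 1 s‖ ^ (ε - 1) / ξ 2 + ‖x 1 s - x 2 s‖ ^ (ε - 1) / ξ 0
        + ‖x 2 s - x 0 s‖ ^ (ε - 1) / ξ 1 := by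
  have hderiv : ∀ u ∈ I, HasDerivAt (fun u => ‖x 0 u - x 1 u‖ ^ (ε - 1) / ξ 2
      + ‖x 1 u - x 2 u‖ ^ (ε - 1) / ξ 0 + ‖x 2 u - x 0 u‖ ^ (ε - 1) / ξ 1) 0 u := by
    intro u hu
    have hx : ∀ l, HasDerivAt (x l) (vortexVelocity ε c ξ (fun l => x l u) l) u :=
      fun l => hode l u hu
    have d01 := hasDerivAt_norm_sub_rpow_div hx (k := 2) (by decide) (by decide) (by decide) (hξ 2)
      (hdist u hu 0 1 (by decide))
    have d12 := hasDerivAt_norm_sub_rpow_div hx (k := 0) (by decide) (by decide) (by decide) (hξ 0)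
      (hdist u hu 1 2 (by decide))
    have d20 := hasDerivAt_norm_sub_rpow_div hx (k := 1) (by decide) (by decide) (by decide) (hξ 1)
      (hdist u hu 2 0 (by decide))
    refine ((d01.add d12).add d20).congr_deriv ?_
    rw [← inner_sub_perp_sub_cyclic (x 0 u) (x 1 u), inner_sub_perp_sub_cyclic (x 2 u) (x 0 u),
      norm_sub_rev (x 0 u) (x 2 u), norm_sub_rev (x 1 u) (x 0 u), norm_sub_rev (x 2 u) (x 1 u)]
    ring
  exact hI.is_const_of_deriv_eq_zero hconn
    (fun u hu => (hderiv u hu).differentiableAt.differentiableWithinAt)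
    (fun u hu => (hderiv u hu).deriv) ht hs

/-- the quantity `S_ε = l₁₂^(ε-1)/ξ₃ + l₂₃^(ε-1)/ξ₁ + l₃₁^(ε-1)/ξ₂` is constant in time
along solutions of the three point vortex system. -/
theorem stmt_3 (ε c : ℝ) (hε : ε ∈ Set.Ioo (0:ℝ) 1) (hc : 0 < c)
    (ξ : Fin 3 → ℝ) (hξ : ∀ i, ξ i ≠ 0)
    (x : Fin 3 → ℝ → EuclideanSpace ℝ (Fin 2)) (I : Set ℝ) (hI : IsOpen I)
    (hconn : IsPreconnected I)
    (hdist : ∀ s ∈ I, ∀ i j : Fin 3, i ≠ j → x i s ≠ x j s)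
    (hode : ∀ i : Fin 3, ∀ s ∈ I,
      HasDerivAt (x i) (∑ j ∈ Finset.univ.erase i, ξ j • K ε c (x i s - x j s)) s)
    (t s : ℝ) (ht : t ∈ I) (hs : s ∈ I) :
    ‖x 0 t - x 1 t‖ ^ (ε - 1) / ξ 2 + ‖x 1 t - x 2 t‖ ^ (ε - 1) / ξ 0 + ‖x 2 t - x 0 t‖ ^ (ε - 1) / ξ 1
      = ‖x 0 s - x 1 s‖ ^ (ε - 1) / ξ 2 + ‖x 1 s - x 2 s‖ ^ (ε - 1) / ξ 0
        + ‖x 2 s - x 0 s‖ ^ (ε - 1) / ξ 1 :=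
  stmt_3_general ε c ξ hξ x I hI hconn hdist hode t s ht hs
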